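/- arXiv:1410.5235 — 2 statements merged into one kernel-verified Lean document; each statement's English description precedes it below -/
import Mathlib

section
/- Under the assumptions of the saturation-threshold Hawkes model (φ_i γ-Lipschitz, nondecreasing, [0,1]-valued, and sup_i ∑_j |W_{j→i}| K_{j→i} < ∞), the sequence μ_i(0) = α_i(0), μ_i(k) = α_i(k) − α_i(k−1) for k ≥ 1 defines a probability distribution on ℕ, i.e. μ_i(k) ≥ 0 for all k and ∑_{k≥0} μ_i(k) = 1. -/
open Set Filter Topology

/-!
Write `p η = φ(∑ⱼ W_{j→i} η(j→i))`. Every `ζ` lies in its own cylinder `D_i^k(ζ)`, so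
`α_i(k) ≤ p ζ + (1 - p ζ) = 1`; and on `D_i^k(ζ)` the input varies by at most the tail
`t_k = ∑_{j ∉ V_i(k)} |W_{j→i}| K_{j→i}`, so by the Lipschitz bound `α_i(k) ≥ 1 - γ t_k`.
The cylinders shrink as `k` grows, so `α_i` is nondecreasing, and `t_k → 0` by dominated
convergence because the `V_i(k)` exhaust the support of `W`. Hence `α_i(k) ↑ 1`, and the
increments `μ_i(k)` are nonnegative and telescope to `1`.
-/

lemma nonneg_and_hasSum_of_monotone_of_tendsto {a μ : ℕ → ℝ} {L : ℝ} (ha0 : 0 ≤ a 0)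
    (ha : Monotone a) (hlim : Tendsto a atTop (𝓝 L)) (hμ0 : μ 0 = a 0)
    (hμ : ∀ k, 1 ≤ k → μ k = a k - a (k - 1)) :
    (∀ k, 0 ≤ μ k) ∧ HasSum μ L := by
  have hμnonneg : ∀ k, 0 ≤ μ k := by
    rintro (_ | k)
    · rwa [hμ0]
    · rw [hμ (k + 1) k.succ_pos, sub_nonneg]
      exact ha (Nat.sub_le _ _)
  have hpartial : ∀ n, ∑ k ∈ Finset.range (n + 1), μ k = a n := by
    intro n
    induction n with
    | zero => simp [hμ0]
    | succ n ih => rw [Finset.sum_range_succ, ih, hμ (n + 1) n.succ_pos]; simp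
  refine ⟨hμnonneg, (hasSum_iff_tendsto_nat_of_nonneg hμnonneg L).2 ?_⟩
  exact (tendsto_add_atTop_iff_nat 1).1 (hlim.congr fun n => (hpartial n).symm)

lemma tendsto_tsum_indicator_compl_zero {I : Type*} {f : I → ℝ} (hf : Summable f)
    {V : ℕ → Finset I} (hV : Monotone V) (hcov : ∀ j, f j ≠ 0 → ∃ k, j ∈ V k) :
    Tendsto (fun k => ∑' j, (↑(V k) : Set I)ᶜ.indicator f j) atTop (𝓝 0) := by
  have hpoint : ∀ j, Tendsto (fun k => (↑(V k) : Set I)ᶜ.indicator f j) atTop (𝓝 0) := by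
    intro j
    by_cases hj : f j = 0
    · exact tendsto_const_nhds.congr fun k => (indicator_apply_eq_zero.2 fun _ => hj).symm
    obtain ⟨k₀, hk₀⟩ := hcov j hj
    refine tendsto_const_nhds.congr' ?_
    filter_upwards [eventually_ge_atTop k₀] with k hk
    rw [indicator_of_notMem (not_not.2 (hV hk hk₀))]
  simpa using tendsto_tsum_of_dominated_convergence hf.abs hpoint
    (Eventually.of_forall fun _ _ => norm_indicator_le_norm_self _ _)

section Oscillation

variable {I : Type*} {W K : I → ℝ} {η η' : I → ℕ}

lemma summable_mul_of_le (hsum : Summable fun j => |W j| * K j) (hη : ∀ j, (η j : ℝ) ≤ K j) :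
    Summable fun j => W j * (η j : ℝ) :=
  hsum.of_norm_bounded fun j => by
    rw [Real.norm_eq_abs, abs_mul, Nat.abs_cast]
    exact mul_le_mul_of_nonneg_left (hη j) (abs_nonneg _)

lemma abs_tsum_sub_tsum_le_tail (hsum : Summable fun j => |W j| * K j)
    (hη : ∀ j, (η j : ℝ) ≤ K j) (hη' : ∀ j, (η' j : ℝ) ≤ K j) {s : Finset I}
    (heq : ∀ j ∈ s, η j = η' j) :
    |∑' j, W j * (η j : ℝ) - ∑' j, W j * (η' j : ℝ)|
      ≤ ∑' j, (↑s : Set I)ᶜ.indicator (fun j => |W j| * K j) j := by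
  rw [← (summable_mul_of_le hsum hη).tsum_sub (summable_mul_of_le hsum hη'), ← Real.norm_eq_abs]
  refine tsum_of_norm_bounded (hsum.indicator _).hasSum fun j => ?_
  rw [Real.norm_eq_abs, ← mul_sub, abs_mul]
  by_cases hj : j ∈ s
  · rw [indicator_of_notMem (by simpa using hj), heq j hj, sub_self, abs_zero, mul_zero]
  · rw [indicator_of_mem (by exact hj)]
    exact mul_le_mul_of_nonneg_left
      (abs_sub_le_of_nonneg_of_le (Nat.cast_nonneg _) (hη j) (Nat.cast_nonneg _) (hη' j))
      (abs_nonneg _)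

lemma sub_le_mul_tail_of_lipschitz {γ : ℝ} (hγ : 0 ≤ γ) {φ : ℝ → ℝ}
    (hφ : ∀ x y : ℝ, |φ x - φ y| ≤ γ * |x - y|) (hsum : Summable fun j => |W j| * K j)
    (hη : ∀ j, (η j : ℝ) ≤ K j) (hη' : ∀ j, (η' j : ℝ) ≤ K j) {s : Finset I}
    (heq : ∀ j ∈ s, η j = η' j) :
    φ (∑' j, W j * (η j : ℝ)) - φ (∑' j, W j * (η' j : ℝ))
      ≤ γ * ∑' j, (↑s : Set I)ᶜ.indicator (fun j => |W j| * K j) j :=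
  (le_abs_self _).trans <| (hφ _ _).trans <|
    mul_le_mul_of_nonneg_left (abs_tsum_sub_tsum_le_tail hsum hη hη' heq) hγ

end Oscillation

section KalikowAlpha

variable {X : Type*} {p : X → ℝ} {ε : ℝ}

/-- With `p η = φ(∑ⱼ W_{j→i} η(j→i))`, `infMass p (D_i^k ζ)` is `r_i^{[k]}(1|ζ) + r_i^{[k]}(0|ζ)`
and `kalikowAlpha p D_i^k S̃` is `α_i(k)`. -/
noncomputable def infMass (p : X → ℝ) (A : Set X) : ℝ :=
  sInf (p '' A) + sInf ((fun η => 1 - p η) '' A)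

noncomputable def kalikowAlpha (p : X → ℝ) (D : X → Set X) (S : Set X) : ℝ :=
  sInf ((fun ζ => infMass p (D ζ)) '' S)

section infMass

variable {A B : Set X}

lemma bddBelow_image_of_mem_Icc (hp : ∀ x, p x ∈ Icc (0 : ℝ) 1) (A : Set X) :
    BddBelow (p '' A) ∧ BddBelow ((fun η => 1 - p η) '' A) :=
  ⟨⟨0, by rintro _ ⟨x, -, rfl⟩; exact (hp x).1⟩,
    ⟨0, by rintro _ ⟨x, -, rfl⟩; exact sub_nonneg.2 (hp x).2⟩⟩

lemma infMass_nonneg (hp : ∀ x, p x ∈ Icc (0 : ℝ) 1) (A : Set X) : 0 ≤ infMass p A :=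
  add_nonneg (Real.sInf_nonneg (by rintro _ ⟨x, -, rfl⟩; exact (hp x).1))
    (Real.sInf_nonneg (by rintro _ ⟨x, -, rfl⟩; exact sub_nonneg.2 (hp x).2))

lemma infMass_le_one (hp : ∀ x, p x ∈ Icc (0 : ℝ) 1) {x : X} (hx : x ∈ A) :
    infMass p A ≤ 1 := by
  obtain ⟨hbdd, hbdd'⟩ := bddBelow_image_of_mem_Icc hp A
  have h := csInf_le hbdd (mem_image_of_mem p hx)
  have h' := csInf_le hbdd' (mem_image_of_mem (fun η => 1 - p η) hx)
  rw [infMass]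
  linarith

lemma one_sub_le_infMass (hA : A.Nonempty) (hosc : ∀ x ∈ A, ∀ y ∈ A, p y - p x ≤ ε) :
    1 - ε ≤ infMass p A := by
  suffices 1 - ε - sInf ((fun η => 1 - p η) '' A) ≤ sInf (p '' A) by rw [infMass]; linarith
  refine le_csInf (hA.image p) ?_
  rintro _ ⟨x, hx, rfl⟩
  suffices 1 - ε - p x ≤ sInf ((fun η => 1 - p η) '' A) by linarith
  refine le_csInf (hA.image _) ?_
  rintro _ ⟨y, hy, rfl⟩
  linarith [hosc x hx y hy]

lemma infMass_anti (hp : ∀ x, p x ∈ Icc (0 : ℝ) 1) (hA : A.Nonempty) (hAB : A ⊆ B) :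
    infMass p B ≤ infMass p A := by
  obtain ⟨hbdd, hbdd'⟩ := bddBelow_image_of_mem_Icc hp B
  exact add_le_add (csInf_le_csInf hbdd (hA.image _) (image_mono hAB))
    (csInf_le_csInf hbdd' (hA.image _) (image_mono hAB))

end infMass

variable {D D' : X → Set X} {S : Set X}

lemma kalikowAlpha_nonneg (hp : ∀ x, p x ∈ Icc (0 : ℝ) 1) : 0 ≤ kalikowAlpha p D S :=
  Real.sInf_nonneg (by rintro _ ⟨ζ, -, rfl⟩; exact infMass_nonneg hp _)

lemma bddBelow_image_infMass (hp : ∀ x, p x ∈ Icc (0 : ℝ) 1) :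
    BddBelow ((fun ζ => infMass p (D ζ)) '' S) :=
  ⟨0, by rintro _ ⟨ζ, -, rfl⟩; exact infMass_nonneg hp _⟩

lemma kalikowAlpha_le_one (hp : ∀ x, p x ∈ Icc (0 : ℝ) 1) {ζ : X} (hζ : ζ ∈ S)
    (hself : ζ ∈ D ζ) : kalikowAlpha p D S ≤ 1 :=
  (csInf_le (bddBelow_image_infMass hp) (mem_image_of_mem _ hζ)).trans
    (infMass_le_one hp hself)

lemma one_sub_le_kalikowAlpha (hS : S.Nonempty) (hself : ∀ ζ ∈ S, ζ ∈ D ζ)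
    (hosc : ∀ ζ ∈ S, ∀ x ∈ D ζ, ∀ y ∈ D ζ, p y - p x ≤ ε) : 1 - ε ≤ kalikowAlpha p D S := by
  refine le_csInf (hS.image _) ?_
  rintro _ ⟨ζ, hζ, rfl⟩
  exact one_sub_le_infMass ⟨ζ, hself ζ hζ⟩ (hosc ζ hζ)

lemma kalikowAlpha_anti (hp : ∀ x, p x ∈ Icc (0 : ℝ) 1) (hS : S.Nonempty)
    (hself : ∀ ζ ∈ S, ζ ∈ D ζ) (hDD' : ∀ ζ ∈ S, D ζ ⊆ D' ζ) :
    kalikowAlpha p D' S ≤ kalikowAlpha p D S := by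
  refine le_csInf (hS.image _) ?_
  rintro _ ⟨ζ, hζ, rfl⟩
  exact (csInf_le (bddBelow_image_infMass hp) (mem_image_of_mem _ hζ)).trans
    (infMass_anti hp ⟨ζ, hself ζ hζ⟩ (hDD' ζ hζ))

end KalikowAlpha

theorem stmt1_general {I : Type*} (γ : ℝ) (hγ : 0 ≤ γ)
    (φ : ℝ → ℝ) (hφLip : ∀ x y : ℝ, |φ x - φ y| ≤ γ * |x - y|)
    (hφ01 : ∀ x, φ x ∈ Set.Icc (0 : ℝ) 1)
    (W K : I → ℝ) (hK : ∀ j, 0 < K j)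
    (hsum : Summable (fun j => |W j| * K j))
    (V : ℕ → Finset I) (hVmono : Monotone V)
    (hVcov : ∀ j, W j ≠ 0 → ∃ k, j ∈ V k)
    (Stilde : Set (I → ℕ)) (hS : Stilde = {η | ∀ j, (η j : ℝ) ≤ K j})
    (D : ℕ → (I → ℕ) → Set (I → ℕ))
    (hD : ∀ k ζ, D k ζ = {η ∈ Stilde | ∀ j ∈ V k, η j = ζ j})
    (r1 r0 : ℕ → (I → ℕ) → ℝ)
    (hr1 : ∀ k ζ, r1 k ζ = sInf ((fun η : I → ℕ => φ (∑' j, W j * (η j : ℝ))) '' D k ζ))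
    (hr0 : ∀ k ζ, r0 k ζ = sInf ((fun η : I → ℕ => 1 - φ (∑' j, W j * (η j : ℝ))) '' D k ζ))
    (α : ℕ → ℝ) (hα : ∀ k, α k = sInf ((fun ζ => r1 k ζ + r0 k ζ) '' Stilde))
    (μ : ℕ → ℝ) (hμ0 : μ 0 = α 0) (hμ : ∀ k, 1 ≤ k → μ k = α k - α (k - 1)) :
    (∀ k, 0 ≤ μ k) ∧ HasSum μ 1 := by
  set p : (I → ℕ) → ℝ := fun η => φ (∑' j, W j * (η j : ℝ))
  have hp : ∀ η, p η ∈ Icc (0 : ℝ) 1 := fun η => hφ01 _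
  have hαk : ∀ k, α k = kalikowAlpha p (D k) Stilde := fun k => by simp only [hα, hr1, hr0]; rfl
  have hzero : (0 : I → ℕ) ∈ Stilde := by rw [hS]; intro j; simpa using (hK j).le
  have hself : ∀ k, ∀ ζ ∈ Stilde, ζ ∈ D k ζ := fun k ζ hζ => by
    rw [hD]; exact ⟨hζ, fun _ _ => rfl⟩
  have hmono : Monotone α := monotone_nat_of_le_succ fun k => by
    rw [hαk, hαk]
    refine kalikowAlpha_anti hp ⟨0, hzero⟩ (hself _) fun ζ _ η hη => ?_
    rw [hD] at hη ⊢
    exact ⟨hη.1, fun j hj => hη.2 j (hVmono k.le_succ hj)⟩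
  set t : ℕ → ℝ := fun k => ∑' j, (↑(V k) : Set I)ᶜ.indicator (fun j => |W j| * K j) j
  have hosc : ∀ k, ∀ ζ ∈ Stilde, ∀ η ∈ D k ζ, ∀ η' ∈ D k ζ, p η' - p η ≤ γ * t k := by
    intro k ζ _ η hη η' hη'
    rw [hD, hS] at hη hη'
    exact sub_le_mul_tail_of_lipschitz hγ hφLip hsum hη'.1 hη.1
      fun j hj => (hη'.2 j hj).trans (hη.2 j hj).symm
  have ht : Tendsto t atTop (𝓝 0) := tendsto_tsum_indicator_compl_zero hsum hVmono
    fun j hj => hVcov j fun hW => hj (by simp [hW])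
  have hlower : Tendsto (fun k => 1 - γ * t k) atTop (𝓝 1) := by
    simpa using tendsto_const_nhds.sub (ht.const_mul γ)
  have hlim : Tendsto α atTop (𝓝 1) := by
    refine tendsto_of_tendsto_of_tendsto_of_le_of_le hlower tendsto_const_nhds
      (fun k => ?_) (fun k => ?_) <;> rw [hαk]
    · exact one_sub_le_kalikowAlpha ⟨0, hzero⟩ (hself k) (hosc k)
    · exact kalikowAlpha_le_one hp hzero (hself k 0 hzero)
  refine nonneg_and_hasSum_of_monotone_of_tendsto ?_ hmono hlim hμ0 hμ
  rw [hαk]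
  exact kalikowAlpha_nonneg hp

/-- In the saturation-threshold model, the Kalikow weights
μ_i(0) = α_i(0), μ_i(k) = α_i(k) − α_i(k−1) form a probability distribution on ℕ. -/
theorem stmt1 {I : Type*} [Countable I] (γ : ℝ) (hγ : 0 ≤ γ)
    (φ : ℝ → ℝ) (hφLip : ∀ x y : ℝ, |φ x - φ y| ≤ γ * |x - y|)
    (hφmono : Monotone φ) (hφ01 : ∀ x, φ x ∈ Set.Icc (0 : ℝ) 1)
    (W K : I → ℝ) (hK : ∀ j, 0 < K j)
    (hsum : Summable (fun j => |W j| * K j))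
    (V : ℕ → Finset I) (hV0 : V 0 = ∅) (hVmono : Monotone V)
    (hVcov : ∀ j, W j ≠ 0 → ∃ k, j ∈ V k)
    (Stilde : Set (I → ℕ)) (hS : Stilde = {η | ∀ j, (η j : ℝ) ≤ K j})
    (D : ℕ → (I → ℕ) → Set (I → ℕ))
    (hD : ∀ k ζ, D k ζ = {η ∈ Stilde | ∀ j ∈ V k, η j = ζ j})
    (r1 r0 : ℕ → (I → ℕ) → ℝ)
    (hr1 : ∀ k ζ, r1 k ζ = sInf ((fun η : I → ℕ => φ (∑' j, W j * (η j : ℝ))) '' D k ζ))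
    (hr0 : ∀ k ζ, r0 k ζ = sInf ((fun η : I → ℕ => 1 - φ (∑' j, W j * (η j : ℝ))) '' D k ζ))
    (α : ℕ → ℝ) (hα : ∀ k, α k = sInf ((fun ζ => r1 k ζ + r0 k ζ) '' Stilde))
    (μ : ℕ → ℝ) (hμ0 : μ 0 = α 0) (hμ : ∀ k, 1 ≤ k → μ k = α k - α (k - 1)) :
    (∀ k, 0 ≤ μ k) ∧ HasSum μ 1 :=
  stmt1_general γ hγ φ hφLip hφ01 W K hK hsum V hVmono hVcov Stilde hS D hD r1 r0 hr1 hr0 α hα μ hμ0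
    hμ
end

section
/- In the second example, with V_{(i₁,i₂)}(k) = {(j₁, i₂−1) : 1 ≤ |j₁−i₁| ≤ k}, weights W_{(j₁,j₂)→(i₁,i₂)} = W|j₁−i₁|^{−β} 1[j₂=i₂−1, j₁≠i₁], and g(s) = e^{−as}, the series ∑_{k≥2} (kΛ(2k+1)+1)( ∑_{l=1}^{k−1} (Λ/l^β) e^{−ak}(e^a−1) + (Λ/k^β)(1−e^{−ak}) ) converges if and only if β > 3. -/
/-!
The term with the inner sum is nonnegative and, for `β ≥ 0`, at most a constant times
`k³ e^{-ak}`, so it never affects convergence. The remaining term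
`(kΛ(2k+1)+1) Λ k^{-β} (1 - e^{-ak})` lies between two positive multiples of `k^{2-β}`, and
`∑ k^{2-β}` converges exactly when `β > 3`.
-/

open Real Finset Filter

theorem summable_ite_le_iff {G : Type*} [AddCommGroup G] [TopologicalSpace G]
    [IsTopologicalAddGroup G] (f : ℕ → G) (m : ℕ) :
    Summable (fun k => if m ≤ k then f k else 0) ↔ Summable f := by
  rw [← summable_nat_add_iff m, ← summable_nat_add_iff m (f := f)]
  simp

noncomputable def seriesTerm (a Λ β : ℝ) (k : ℕ) : ℝ :=
  ((k : ℝ) * Λ * (2 * (k : ℝ) + 1) + 1) *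
    ((∑ l ∈ Icc 1 (k - 1), Λ / (l : ℝ) ^ β) * (exp (-a * (k : ℝ)) * (exp a - 1))
      + Λ / (k : ℝ) ^ β * (1 - exp (-a * (k : ℝ))))

section

variable {a Λ β : ℝ}

theorem sum_Icc_div_rpow_le (hΛ : 0 ≤ Λ) (hβ : 0 ≤ β) (n : ℕ) :
    ∑ l ∈ Icc 1 n, Λ / (l : ℝ) ^ β ≤ n * Λ :=
  calc ∑ l ∈ Icc 1 n, Λ / (l : ℝ) ^ β
      ≤ ∑ _l ∈ Icc 1 n, Λ :=
        sum_le_sum fun l hl =>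
          div_le_self hΛ (one_le_rpow (by exact_mod_cast (mem_Icc.1 hl).1) hβ)
    _ = n * Λ := by simp

theorem exp_neg_mul_natCast_le_one (ha : 0 ≤ a) (k : ℕ) : exp (-a * k) ≤ 1 :=
  exp_le_one_iff.2 (by nlinarith [k.cast_nonneg (α := ℝ)])

theorem seriesTerm_nonneg (ha : 0 ≤ a) (hΛ : 0 ≤ Λ) (k : ℕ) : 0 ≤ seriesTerm a Λ β k := by
  have hexp_a : 0 ≤ exp a - 1 := sub_nonneg.2 (one_le_exp ha)
  have hexp_k : 0 ≤ 1 - exp (-a * k) := sub_nonneg.2 (exp_neg_mul_natCast_le_one ha k)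
  unfold seriesTerm
  positivity

theorem mul_rpow_le_seriesTerm (ha : 0 < a) (hΛ : 0 ≤ Λ) {k : ℕ} (hk : 1 ≤ k) :
    2 * Λ ^ 2 * (1 - exp (-a)) * (k : ℝ) ^ (2 - β) ≤ seriesTerm a Λ β k := by
  have hk1 : (1 : ℝ) ≤ k := by exact_mod_cast hk
  have hk0 : (0 : ℝ) < k := by linarith
  have hprefactor : 2 * Λ * (k : ℝ) ^ 2 ≤ k * Λ * (2 * k + 1) + 1 := by nlinarith
  have hexp : 1 - exp (-a) ≤ 1 - exp (-a * k) := by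
    gcongr
    nlinarith
  have hexp_nonneg : 0 ≤ 1 - exp (-a) := sub_nonneg.2 (exp_le_one_iff.2 (by linarith))
  have hsum : 0 ≤ (∑ l ∈ Icc 1 (k - 1), Λ / (l : ℝ) ^ β) * (exp (-a * k) * (exp a - 1)) := by
    have : 0 ≤ exp a - 1 := sub_nonneg.2 (one_le_exp ha.le)
    positivity
  calc 2 * Λ ^ 2 * (1 - exp (-a)) * (k : ℝ) ^ (2 - β)
      = (2 * Λ * (k : ℝ) ^ 2) * (Λ / (k : ℝ) ^ β * (1 - exp (-a))) := by
        rw [rpow_sub hk0, rpow_two]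
        ring
    _ ≤ (k * Λ * (2 * k + 1) + 1) * (Λ / (k : ℝ) ^ β * (1 - exp (-a * k))) := by gcongr
    _ ≤ seriesTerm a Λ β k := by
        unfold seriesTerm
        gcongr
        exact le_add_of_nonneg_left hsum

theorem seriesTerm_le (ha : 0 ≤ a) (hΛ : 0 ≤ Λ) (hβ : 0 ≤ β) {k : ℕ} (hk : 1 ≤ k) :
    seriesTerm a Λ β k ≤ (3 * Λ + 1) * Λ * (exp a - 1) * (k ^ 3 * exp (-a * k))
      + (3 * Λ + 1) * Λ * (k : ℝ) ^ (2 - β) := by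
  have hk1 : (1 : ℝ) ≤ k := by exact_mod_cast hk
  have hk0 : (0 : ℝ) < k := by linarith
  have hprefactor : k * Λ * (2 * k + 1) + 1 ≤ (3 * Λ + 1) * (k : ℝ) ^ 2 := by
    nlinarith [mul_le_mul_of_nonneg_left (by nlinarith : (k : ℝ) ≤ k ^ 2) hΛ]
  have hsum : ∑ l ∈ Icc 1 (k - 1), Λ / (l : ℝ) ^ β ≤ k * Λ := by
    refine (sum_Icc_div_rpow_le hΛ hβ (k - 1)).trans ?_
    gcongr
    exact_mod_cast k.sub_le 1
  have hexp_a : 0 ≤ exp a - 1 := sub_nonneg.2 (one_le_exp ha)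
  have hexp_k : 0 ≤ 1 - exp (-a * k) := sub_nonneg.2 (exp_neg_mul_natCast_le_one ha k)
  have hexp_k_le : 1 - exp (-a * k) ≤ 1 := by linarith [exp_pos (-a * k)]
  calc seriesTerm a Λ β k
      ≤ ((3 * Λ + 1) * (k : ℝ) ^ 2) *
          ((k * Λ) * (exp (-a * k) * (exp a - 1)) + Λ / (k : ℝ) ^ β * 1) := by
        unfold seriesTerm
        gcongr
    _ = _ := by
        rw [rpow_sub hk0, rpow_two]
        ring

theorem summable_seriesTerm_iff (ha : 0 < a) (hΛ : 0 < Λ) :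
    Summable (seriesTerm a Λ β) ↔ 3 < β := by
  constructor
  · intro h
    have hc : 0 < 2 * Λ ^ 2 * (1 - exp (-a)) := by
      have : 0 < 1 - exp (-a) := sub_pos.2 (exp_lt_one_iff.2 (by linarith))
      positivity
    have hrpow : Summable fun k : ℕ => (k : ℝ) ^ (2 - β) := by
      refine (summable_mul_left_iff hc.ne').1 (h.of_norm_bounded_eventually_nat ?_)
      filter_upwards [eventually_ge_atTop 1] with k hk
      rw [norm_of_nonneg (by positivity)]
      exact mul_rpow_le_seriesTerm ha hΛ.le hk
    linarith [summable_nat_rpow.1 hrpow]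
  · intro hβ
    refine Summable.of_norm_bounded_eventually_nat
      (((summable_pow_mul_exp_neg_nat_mul 3 ha).mul_left ((3 * Λ + 1) * Λ * (exp a - 1))).add
        ((summable_nat_rpow.2 (by linarith : 2 - β < -1)).mul_left ((3 * Λ + 1) * Λ))) ?_
    filter_upwards [eventually_ge_atTop 1] with k hk
    rw [norm_of_nonneg (seriesTerm_nonneg ha.le hΛ.le k)]
    exact seriesTerm_le ha.le hΛ.le (by linarith) hk

end

theorem stmt12_general (a Λ β : ℝ) (ha : 0 < a) (hΛ : 0 < Λ) :
    Summable (fun k : ℕ => if 2 ≤ k then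
      ((k : ℝ) * Λ * (2 * (k : ℝ) + 1) + 1) *
        ((∑ l ∈ Finset.Icc 1 (k - 1), Λ / (l : ℝ) ^ β) * (exp (-a * (k : ℝ)) * (exp a - 1))
          + Λ / (k : ℝ) ^ β * (1 - exp (-a * (k : ℝ))))
      else 0)
    ↔ 3 < β :=
  (summable_ite_le_iff (seriesTerm a Λ β) 2).trans (summable_seriesTerm_iff ha hΛ)

/-- In the second example, the series
∑_{k≥2} (kΛ(2k+1)+1)( ∑_{l=1}^{k−1} (Λ/l^β) e^{−ak}(e^a−1) + (Λ/k^β)(1−e^{−ak}) )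
converges if and only if β > 3. -/
theorem stmt12 (a Λ β : ℝ) (ha : 0 < a) (hΛ : 0 < Λ) (hβ : 0 < β) :
    Summable (fun k : ℕ => if 2 ≤ k then
      ((k : ℝ) * Λ * (2 * (k : ℝ) + 1) + 1) *
        ((∑ l ∈ Finset.Icc 1 (k - 1), Λ / (l : ℝ) ^ β) * (exp (-a * (k : ℝ)) * (exp a - 1))
          + Λ / (k : ℝ) ^ β * (1 - exp (-a * (k : ℝ))))
      else 0)
    ↔ 3 < β :=
  stmt12_general a Λ β ha hΛ
end
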